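/- A commuting d-tuple S_𝐭 = (S_{1,t₁},…,S_{d,t_d}) of weighted translation operators with t₁,…,t_d > 0 possesses the wandering subspace property: the closed linear span of ⋃_{k ∈ ℕ^d} S_{1,t₁}^{k₁}⋯S_{d,t_d}^{k_d} E equals L²(ℝ₊), where E is the joint kernel of the adjoint tuple. -/

import Mathlib

open MeasureTheory Set ContinuousLinearMap

noncomputable section

namespace WTS

/-- Lebesgue measure restricted to `ℝ₊ = [0, ∞)`. -/
def mu : Measure ℝ := volume.restrict (Set.Ici (0 : ℝ))

/-- The complex Hilbert space `L²(ℝ₊)`. -/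
abbrev H : Type := Lp ℂ 2 mu

/-- A symbol: a function `φ` that is continuous and positive on `ℝ₊ = [0, ∞)`. -/
structure IsSymbol (φ : ℝ → ℝ) : Prop where
  cont : ContinuousOn φ (Set.Ici 0)
  pos : ∀ x ∈ Set.Ici (0 : ℝ), 0 < φ x

/-- The weight function `φ_t(x) = √(φ(x)/φ(x−t))` for `x ≥ t`, and `0` for `x < t`. -/
def wt (φ : ℝ → ℝ) (t : ℝ) (x : ℝ) : ℝ :=
  if t ≤ x then Real.sqrt (φ x / φ (x - t)) else 0

/-- `S` is the weighted translation operator with symbol `φ` and translation `t`: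
`(S f)(x) = φ_t(x) f(x−t)` for `x ≥ t` and `0` for `x < t`, where `φ_t` is essentially
bounded. -/
structure IsWT (φ : ℝ → ℝ) (t : ℝ) (S : H →L[ℂ] H) : Prop where
  bdd : ∃ C : ℝ, ∀ᵐ x ∂mu, wt φ t x ≤ C
  eval : ∀ f : H, ∀ᵐ x ∂mu,
    (S f : ℝ → ℂ) x = if t ≤ x then (wt φ t x : ℂ) * (f : ℝ → ℂ) (x - t) else 0

/-- `φ_t` is essentially bounded below by a positive constant on `[t, ∞)`;
this is precisely left invertibility of the weighted translation operator. -/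
def LowerBdd (φ : ℝ → ℝ) (t : ℝ) : Prop :=
  ∃ c : ℝ, 0 < c ∧ ∀ᵐ x ∂mu, t ≤ x → c ≤ wt φ t x

/-- `T` is the Cauchy dual of the weighted translation operator with symbol `φ` and
translation `t`: `(T f)(x) = φ_t(x)⁻¹ f(x−t)` for `x ≥ t` and `0` for `x < t`. -/
def IsWTDual (φ : ℝ → ℝ) (t : ℝ) (T : H →L[ℂ] H) : Prop :=
  ∀ f : H, ∀ᵐ x ∂mu,
    (T f : ℝ → ℂ) x = if t ≤ x then ((wt φ t x : ℂ))⁻¹ * (f : ℝ → ℂ) (x - t) else 0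

/-- The ordered product `S₁^{k₁} ⋯ S_d^{k_d}` of powers of a `d`-tuple of operators. -/
def tuplePow {d : ℕ} (S : Fin d → (H →L[ℂ] H)) (k : Fin d → ℕ) : H →L[ℂ] H :=
  (List.ofFn fun i => S i ^ k i).prod

/-- The joint kernel `E = ⋂ᵢ ker Sᵢ*` of the adjoint tuple. -/
def jointKer {d : ℕ} (S : Fin d → (H →L[ℂ] H)) : Set H :=
  {f : H | ∀ i, ContinuousLinearMap.adjoint (S i) f = 0}

end WTS

/-! If `h` is orthogonal to every `S_𝐭^k E`, let `t_{i₀}` be the smallest translation. Each range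
of `S_i` consists of functions vanishing on `[0, t_i)`, so every function supported in
`[0, t_{i₀})` lies in `E`. Testing `h` against `S_{i₀}ⁿ g` with `g = 𝟙_{[0, t_{i₀})} h(· + n t_{i₀})`
gives `∫_{[n t_{i₀}, (n + 1) t_{i₀})} φ_{n t_{i₀}} |h|² = 0`; as the weight is positive, `h`
vanishes on each of these intervals, and they cover `ℝ₊`. -/

theorem List.prod_ofFn_eq_single {M : Type*} [Monoid M] :
    ∀ {n : ℕ} (f : Fin n → M) (i : Fin n), (∀ j ≠ i, f j = 1) → (List.ofFn f).prod = f i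
  | 0, _, i, _ => i.elim0
  | n + 1, f, i, hf => by
    rw [List.ofFn_succ, List.prod_cons]
    cases i using Fin.cases with
    | zero =>
      rw [List.prod_eq_one, mul_one]
      simpa [List.mem_ofFn] using fun j => hf j.succ (Fin.succ_ne_zero j)
    | succ i =>
      rw [hf 0 (Fin.succ_ne_zero i).symm, one_mul]
      exact List.prod_ofFn_eq_single _ i fun j hj => hf j.succ ((Fin.succ_injective _).ne hj)

namespace WTS

open scoped InnerProductSpace

lemma ae_nonneg : ∀ᵐ x ∂mu, 0 ≤ x :=
  ae_restrict_mem measurableSet_Ici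

lemma map_add_const_mu (s : ℝ) :
    mu.map (· + s) = volume.restrict (Ici s) := by
  have hpre : (· + s) ⁻¹' Ici s = Ici (0 : ℝ) := by ext x; simp
  rw [mu, ← hpre, ← Measure.restrict_map (measurable_add_const s) measurableSet_Ici,
    map_add_right_eq_self volume s]

lemma ae_sub_const_of_ae (s : ℝ) {P : ℝ → Prop} (h : ∀ᵐ y ∂mu, P y) :
    ∀ᵐ x ∂mu, s ≤ x → P (x - s) := by
  have hP : ∀ᵐ x ∂volume.restrict (Ici s), P (x - s) := by
    rw [← map_add_const_mu s, (measurableEmbedding_addRight s).ae_map_iff]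
    simpa using h
  exact ae_restrict_of_ae ((ae_restrict_iff' measurableSet_Ici).1 hP)

lemma memLp_comp_add_const {s : ℝ} (hs : 0 ≤ s) (f : H) :
    MemLp (fun y => f (y + s)) 2 mu := by
  have hf : MemLp f 2 (volume.restrict (Ici s)) :=
    (Lp.memLp f).mono_measure (Measure.restrict_mono (Ici_subset_Ici.2 hs) le_rfl)
  rw [← map_add_const_mu s] at hf
  exact hf.comp_of_map (measurable_add_const s).aemeasurable

lemma wt_nonneg (φ : ℝ → ℝ) (t x : ℝ) : 0 ≤ wt φ t x := by
  unfold wt; split_ifs <;> positivity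

section Weight

variable {φ : ℝ → ℝ}

lemma wt_pos (hφ : IsSymbol φ) {t x : ℝ} (ht : 0 ≤ t) (hx : t ≤ x) : 0 < wt φ t x := by
  rw [wt, if_pos hx]
  exact Real.sqrt_pos.2 (div_pos (hφ.pos x (ht.trans hx)) (hφ.pos _ (sub_nonneg.2 hx)))

lemma wt_zero_left (hφ : IsSymbol φ) {x : ℝ} (hx : 0 ≤ x) : wt φ 0 x = 1 := by
  rw [wt, if_pos hx, sub_zero, div_self (hφ.pos x hx).ne', Real.sqrt_one]

lemma wt_mul_wt_sub (hφ : IsSymbol φ) {t s x : ℝ} (ht : 0 ≤ t) (hs : 0 ≤ s)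
    (hx : t + s ≤ x) : wt φ t x * wt φ s (x - t) = wt φ (t + s) x := by
  have hφt : 0 < φ (x - t) := hφ.pos _ (mem_Ici.2 (by linarith))
  simp only [wt]
  rw [if_pos (by linarith : t ≤ x), if_pos (by linarith : s ≤ x - t), if_pos hx,
    ← Real.sqrt_mul (div_nonneg (hφ.pos x (mem_Ici.2 (by linarith))).le hφt.le), sub_sub]
  congr 1
  field_simp

end Weight

namespace IsWT

variable {φ : ℝ → ℝ} {t s : ℝ} {S T : H →L[ℂ] H}

lemma one (hφ : IsSymbol φ) : IsWT φ 0 1 where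
  bdd := ⟨1, by filter_upwards [ae_nonneg] with x hx using (wt_zero_left hφ hx).le⟩
  eval f := by
    filter_upwards [ae_nonneg] with x hx
    simp [hx, wt_zero_left hφ hx]

lemma mul (hφ : IsSymbol φ) (ht : 0 ≤ t) (hs : 0 ≤ s) (hS : IsWT φ t S) (hT : IsWT φ s T) :
    IsWT φ (t + s) (S * T) where
  bdd := by
    obtain ⟨C, hC⟩ := hS.bdd
    obtain ⟨D, hD⟩ := hT.bdd
    refine ⟨max C 0 * max D 0, ?_⟩
    filter_upwards [hC, ae_sub_const_of_ae t hD] with x hCx hDx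
    by_cases hx : t + s ≤ x
    · rw [← wt_mul_wt_sub hφ ht hs hx]
      exact mul_le_mul (hCx.trans (le_max_left _ _)) ((hDx (by linarith)).trans (le_max_left _ _))
        (wt_nonneg _ _ _) (le_max_right _ _)
    · rw [wt, if_neg hx]
      positivity
  eval f := by
    filter_upwards [hS.eval (T f), ae_sub_const_of_ae t (hT.eval f)] with x hSx hTx
    rw [mul_apply_eq_comp, hSx]
    by_cases hx : t + s ≤ x
    · rw [if_pos (by linarith), hTx (by linarith), if_pos (by linarith), if_pos hx, ← mul_assoc,
        ← Complex.ofReal_mul, wt_mul_wt_sub hφ ht hs hx, sub_sub]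
    · rw [if_neg hx]
      split_ifs with hxt
      · rw [hTx hxt, if_neg (by linarith), mul_zero]
      · rfl

lemma pow (hφ : IsSymbol φ) (ht : 0 ≤ t) (hS : IsWT φ t S) : ∀ n : ℕ, IsWT φ (n * t) (S ^ n)
  | 0 => by simpa using one hφ
  | n + 1 => by
    rw [pow_succ', Nat.cast_succ, add_one_mul, add_comm]
    exact hS.mul hφ ht (by positivity) (hS.pow hφ ht n)

lemma adjoint_apply_eq_zero (hS : IsWT φ t S) {g : H} (hg : ∀ᵐ x ∂mu, t ≤ x → g x = 0) :
    adjoint S g = 0 := by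
  refine ext_inner_right ℂ fun v => ?_
  rw [adjoint_inner_left, inner_zero_left, L2.inner_def]
  refine integral_eq_zero_of_ae ?_
  filter_upwards [hS.eval v, hg] with x hSv hgx
  by_cases hx : t ≤ x
  · simp [hgx hx]
  · simp [hSv, hx]

lemma ae_eq_zero_on_Ico (hφ : IsSymbol φ) (hs : 0 ≤ s) (hT : IsWT φ s T) {m : ℝ} {h : H}
    (horth : ∀ g : H, (∀ᵐ x ∂mu, m ≤ x → g x = 0) → ⟪T g, h⟫_ℂ = 0) :
    ∀ᵐ x ∂mu, x ∈ Ico s (s + m) → h x = 0 := by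
  have hmem : MemLp ((Ico 0 m).indicator fun y => h (y + s)) 2 mu :=
    (memLp_comp_add_const hs h).indicator measurableSet_Ico
  set g := hmem.toLp _
  have hTg : ∀ᵐ x ∂mu, T g x = (Ico s (s + m)).indicator (fun x => (wt φ s x : ℂ) * h x) x := by
    filter_upwards [hT.eval g, ae_sub_const_of_ae s hmem.coeFn_toLp] with x hTx hgx
    rw [hTx]
    by_cases hx : s ≤ x
    · have hshift : x - s ∈ Ico 0 m ↔ x ∈ Ico s (s + m) := by
        simp [hx, sub_lt_iff_lt_add']
      rw [if_pos hx, hgx hx]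
      by_cases hxI : x ∈ Ico s (s + m)
      · rw [indicator_of_mem (hshift.2 hxI), indicator_of_mem hxI, sub_add_cancel]
      · rw [indicator_of_notMem (mt hshift.1 hxI), indicator_of_notMem hxI, mul_zero]
    · rw [if_neg hx, indicator_of_notMem fun hxI => hx hxI.1]
  set r : ℝ → ℝ := (Ico s (s + m)).indicator fun x => wt φ s x * ‖h x‖ ^ 2 with hr_def
  have hr : ∀ᵐ x ∂mu, ⟪T g x, h x⟫_ℂ = r x := by
    filter_upwards [hTg] with x hTgx
    by_cases hxI : x ∈ Ico s (s + m)
    · rw [hTgx, hr_def, indicator_of_mem hxI, indicator_of_mem hxI, ← smul_eq_mul, inner_smul_left,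
        inner_self_eq_norm_sq_to_K, Complex.conj_ofReal]
      push_cast
      rfl
    · rw [hTgx, hr_def, indicator_of_notMem hxI, indicator_of_notMem hxI, inner_zero_left,
        Complex.ofReal_zero]
  have hr_int : Integrable r mu := by
    simpa using ((L2.integrable_inner (T g) h).congr hr).re
  have hr_zero : ∫ x, r x ∂mu = 0 := by
    have hsupp : ∀ᵐ x ∂mu, m ≤ x → g x = 0 := by
      filter_upwards [hmem.coeFn_toLp] with x hgx hx
      rw [hgx, indicator_of_notMem fun hxI => hxI.2.not_ge hx]
    have := horth _ hsupp
    rwa [L2.inner_def, integral_congr_ae hr, integral_complex_ofReal, Complex.ofReal_eq_zero] at this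
  have hr_nonneg : 0 ≤ r :=
    indicator_nonneg fun x _ => mul_nonneg (wt_nonneg φ s x) (sq_nonneg _)
  filter_upwards [(integral_eq_zero_iff_of_nonneg hr_nonneg hr_int).1 hr_zero] with x hx hxI
  have : wt φ s x * ‖h x‖ ^ 2 = 0 := by simpa [r, hxI] using hx
  simpa [(wt_pos hφ hs hxI.1).ne'] using this

lemma eq_zero_of_inner_pow_eq_zero (hφ : IsSymbol φ) (ht : 0 < t) (hS : IsWT φ t S) {h : H}
    (horth : ∀ (n : ℕ) (g : H), (∀ᵐ x ∂mu, t ≤ x → g x = 0) → ⟪(S ^ n) g, h⟫_ℂ = 0) :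
    h = 0 := by
  have hIco (n : ℕ) : ∀ᵐ x ∂mu, x ∈ Ico (n * t) (n * t + t) → h x = 0 :=
    (hS.pow hφ ht.le n).ae_eq_zero_on_Ico hφ (by positivity) (horth n)
  refine Lp.eq_zero_iff_ae_eq_zero.2 ?_
  filter_upwards [ae_all_iff.2 hIco, ae_nonneg] with x hx hx0
  refine hx ⌊x / t⌋₊ ⟨?_, ?_⟩
  · exact (le_div_iff₀ ht).1 (Nat.floor_le (div_nonneg hx0 ht.le))
  · rw [← add_one_mul]
    exact (div_lt_iff₀ ht).1 (Nat.lt_floor_add_one _)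

end IsWT

section TuplePow

variable {d : ℕ} (S : Fin d → (H →L[ℂ] H))

lemma tuplePow_zero : tuplePow S 0 = 1 := by
  simp [tuplePow]

lemma tuplePow_single (i : Fin d) (n : ℕ) : tuplePow S (Pi.single i n) = S i ^ n := by
  rw [tuplePow, List.prod_ofFn_eq_single _ i fun j hj => by simp [hj], Pi.single_eq_same]

end TuplePow

theorem statement_10_general {d : ℕ} (φ : Fin d → ℝ → ℝ) (t : Fin d → ℝ)
    (S : Fin d → (H →L[ℂ] H))
    (hφ : ∀ i, IsSymbol (φ i)) (ht : ∀ i, 0 < t i)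
    (hS : ∀ i, IsWT (φ i) (t i) (S i)) :
    (Submodule.span ℂ
        (⋃ k : Fin d → ℕ, ⇑(tuplePow S k) '' jointKer S)).topologicalClosure = ⊤ := by
  rw [Submodule.topologicalClosure_eq_top_iff, Submodule.eq_bot_iff]
  intro h hh
  have horth (k : Fin d → ℕ) (g : H) (hg : g ∈ jointKer S) : ⟪tuplePow S k g, h⟫_ℂ = 0 :=
    (Submodule.mem_orthogonal _ h).1 hh _
      (Submodule.subset_span (mem_iUnion.2 ⟨k, mem_image_of_mem _ hg⟩))
  rcases isEmpty_or_nonempty (Fin d) with hd | hd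
  · simpa [tuplePow_zero] using horth 0 h isEmptyElim
  obtain ⟨i₀, hi₀⟩ := Finite.exists_min t
  refine (hS i₀).eq_zero_of_inner_pow_eq_zero (hφ i₀) (ht i₀) fun n g hg => ?_
  rw [← tuplePow_single]
  exact horth _ g fun i =>
    (hS i).adjoint_apply_eq_zero (hg.mono fun x hx hix => hx ((hi₀ i).trans hix))

/-- a commuting `d`-tuple of weighted translation operators possesses the
wandering subspace property: the closed linear span of `⋃_{k ∈ ℕ^d} S_𝐭^k E` is all of
`L²(ℝ₊)`, where `E` is the joint kernel of the adjoint tuple. -/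
theorem statement_10 {d : ℕ} (φ : Fin d → ℝ → ℝ) (t : Fin d → ℝ)
    (S : Fin d → (H →L[ℂ] H))
    (hφ : ∀ i, IsSymbol (φ i)) (ht : ∀ i, 0 < t i)
    (hS : ∀ i, IsWT (φ i) (t i) (S i))
    (hcomm : ∀ i j, S i * S j = S j * S i) :
    (Submodule.span ℂ
        (⋃ k : Fin d → ℕ, ⇑(tuplePow S k) '' jointKer S)).topologicalClosure = ⊤ :=
  statement_10_general φ t S hφ ht hS

end WTS
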